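/- arXiv:2307.16792 — 2 statements merged into one kernel-verified Lean document; each statement's English description precedes it below -/
import Mathlib

section
/- Let d ∈ ℕ and β, r ∈ (0,∞). There exists a constant c₁ ∈ (0, 1/9999) depending only on (d,β,r) such that for every integer Q ≥ 2 and every map T: G_{Q,d} → {−1,1}, where G_{Q,d} = { (k₁/(2Q), …, k_d/(2Q)) : k₁,…,k_d odd integers } ∩ [0,1]^d, there exists f ∈ B^β_r([0,1]^d) with sup_{x ∈ [0,1]^d} |f(x)| = c₁/Q^β and f(x) = (c₁/Q^β)·T(a) for every a ∈ G_{Q,d} and every x ∈ [0,1]^d with ‖x − a‖₂ ≤ 1/(5Q). -/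
open MeasureTheory
open scoped ENNReal NNReal

namespace DNNLogistic

noncomputable section

/-- The unit cube `[0,1]^d` as a subset of `ℝ^d`. -/
def cube (d : ℕ) : Set (Fin d → ℝ) := {x | ∀ i, x i ∈ Set.Icc (0 : ℝ) 1}

/-- The logistic loss `φ(t) = log (1 + e^{-t})`. -/
def logLoss (t : ℝ) : ℝ := Real.log (1 + Real.exp (-t))

/-- `sgn(t) = 1` if `t ≥ 0`, `sgn(t) = -1` otherwise. -/
def rsgn (t : ℝ) : ℝ := if 0 ≤ t then 1 else -1

/-- The Euclidean distance `‖x - z‖₂` on `ℝ^m`. -/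
def eucDist {m : ℕ} (x z : Fin m → ℝ) : ℝ := Real.sqrt (∑ i, (x i - z i) ^ 2)

/-- The logistic risk `R^φ_{η,Q}(f)` of `f` with respect to the conditional probability
function `η` and the marginal distribution `Q` on `[0,1]^d`. -/
def logRisk (d : ℕ) (Q : Measure (Fin d → ℝ)) (η f : (Fin d → ℝ) → ℝ) : ℝ :=
  ∫ x, (η x * logLoss (f x) + (1 - η x) * logLoss (-f x)) ∂Q

/-- The infimum of the logistic risk over all Borel measurable real-valued functions. -/
def infLogRisk (d : ℕ) (Q : Measure (Fin d → ℝ)) (η : (Fin d → ℝ) → ℝ) : ℝ :=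
  sInf {t | ∃ g : (Fin d → ℝ) → ℝ, Measurable g ∧ t = logRisk d Q η g}

/-- The excess logistic risk `E^φ_{η,Q}(f)`. -/
def excessLogRisk (d : ℕ) (Q : Measure (Fin d → ℝ)) (η f : (Fin d → ℝ) → ℝ) : ℝ :=
  logRisk d Q η f - infLogRisk d Q η

/-- The misclassification risk `R_{η,Q}(f)`; note `1{sgn(f x) = -1} = 1{f x < 0}` and
`1{sgn(f x) = 1} = 1{0 ≤ f x}`. -/
def misRisk (d : ℕ) (Q : Measure (Fin d → ℝ)) (η f : (Fin d → ℝ) → ℝ) : ℝ :=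
  ∫ x, (η x * (if f x < 0 then (1 : ℝ) else 0)
      + (1 - η x) * (if 0 ≤ f x then (1 : ℝ) else 0)) ∂Q

/-- The infimum of the misclassification risk over all Borel measurable functions. -/
def infMisRisk (d : ℕ) (Q : Measure (Fin d → ℝ)) (η : (Fin d → ℝ) → ℝ) : ℝ :=
  sInf {t | ∃ g : (Fin d → ℝ) → ℝ, Measurable g ∧ t = misRisk d Q η g}

/-- The excess misclassification error `E_{η,Q}(f)`. -/
def excessMisRisk (d : ℕ) (Q : Measure (Fin d → ℝ)) (η f : (Fin d → ℝ) → ℝ) : ℝ :=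
  misRisk d Q η f - infMisRisk d Q η

/-- The joint distribution `P_{η,Q}` on `ℝ^d × ℝ`: the marginal on the first factor is `Q`,
and the conditional distribution of the label given `x` puts mass `η x` on `1` and mass
`1 - η x` on `-1`.  It satisfies `P_{η,Q}(S) = ∫ (η x • 1_S(x,1) + (1 - η x) • 1_S(x,-1)) dQ`. -/
def PeQ (d : ℕ) (Q : Measure (Fin d → ℝ)) (η : (Fin d → ℝ) → ℝ) :
    Measure ((Fin d → ℝ) × ℝ) :=
  (Q.withDensity fun x => ENNReal.ofReal (η x)).map (fun x => (x, (1 : ℝ)))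
    + (Q.withDensity fun x => ENNReal.ofReal (1 - η x)).map (fun x => (x, (-1 : ℝ)))

/-- The logistic risk `R^φ_P(f)` with respect to a joint distribution `P` on
`[0,1]^d × {-1,1}`. -/
def jointLogRisk (d : ℕ) (P : Measure ((Fin d → ℝ) × ℝ)) (f : (Fin d → ℝ) → ℝ) : ℝ :=
  ∫ z, logLoss (z.2 * f z.1) ∂P

/-- The Lebesgue measure on the cube `[0,1]^d`. -/
def cubeVolume (d : ℕ) : Measure (Fin d → ℝ) := volume.restrict (cube d)

/-- The `n`-fold product measure `P^{⊗n}` on the sample space. -/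
def nSample (d n : ℕ) (P : Measure ((Fin d → ℝ) × ℝ)) :
    Measure (Fin n → (Fin d → ℝ) × ℝ) :=
  Measure.pi fun _ => P

/-- `fhat` is an empirical logistic-risk minimizer over the class `Fcls` from samples of
size `n`: it is jointly Borel measurable, and for every sample
`z ∈ ([0,1]^d × {-1,1})^n` the function `fhat z` belongs to `Fcls` and minimizes the
empirical logistic risk over `Fcls`. -/
def IsERM (d n : ℕ) (Fcls : Set ((Fin d → ℝ) → ℝ))
    (fhat : (Fin n → (Fin d → ℝ) × ℝ) → (Fin d → ℝ) → ℝ) : Prop :=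
  Measurable (fun p : (Fin n → (Fin d → ℝ) × ℝ) × (Fin d → ℝ) => fhat p.1 p.2) ∧
  ∀ z : Fin n → (Fin d → ℝ) × ℝ, (∀ i, z i ∈ (cube d) ×ˢ ({-1, 1} : Set ℝ)) →
    fhat z ∈ Fcls ∧
    ∀ f ∈ Fcls,
      ∑ i, logLoss ((z i).2 * fhat z ((z i).1)) ≤ ∑ i, logLoss ((z i).2 * f ((z i).1))

/-- The successive hidden layers of a fully connected ReLU network:
`u₀ = x` and `u_{k+1} = σ_{v_{k+1}}(W_k u_k)`. -/
def fnnHidden (m : ℕ → ℕ) (W : ∀ k : ℕ, Matrix (Fin (m (k + 1))) (Fin (m k)) ℝ)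
    (v : ∀ k : ℕ, Fin (m k) → ℝ) : (k : ℕ) → (Fin (m 0) → ℝ) → (Fin (m k) → ℝ)
  | 0 => fun x => x
  | (k + 1) => fun x j => max ((W k).mulVec (fnnHidden m W v k x) j - v (k + 1) j) 0

/-- `f ∈ F^FNN_d(G, N, S, B, F)`: `f : ℝ^d → ℝ` is realized by a fully connected ReLU
network `x ↦ W_L σ_{v_L} W_{L-1} ⋯ W_1 σ_{v_1} W_0 x` with depth `L ≤ G`, hidden widths
at most `N`, at most `S` nonzero entries among all weight matrices and bias vectors, all
entries bounded by `B` in absolute value, and `sup_{x ∈ [0,1]^d} |f x| ≤ F`. -/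
def IsFNN (d : ℕ) (G N S B : ℝ) (F : ℝ≥0∞) (f : (Fin d → ℝ) → ℝ) : Prop :=
  ∃ (L : ℕ) (m : ℕ → ℕ) (W : ∀ k : ℕ, Matrix (Fin (m (k + 1))) (Fin (m k)) ℝ)
    (v : ∀ k : ℕ, Fin (m k) → ℝ) (hm0 : m 0 = d) (hmL : m (L + 1) = 1),
    1 ≤ L ∧ (L : ℝ) ≤ G ∧
    (∀ k : ℕ, 1 ≤ k → k ≤ L → (m k : ℝ) ≤ N) ∧
    (((∑ k ∈ Finset.range (L + 1),
          Set.ncard {p : Fin (m (k + 1)) × Fin (m k) | W k p.1 p.2 ≠ 0}) +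
        (∑ k ∈ Finset.Icc 1 L, Set.ncard {j : Fin (m k) | v k j ≠ 0}) : ℝ) ≤ S) ∧
    (∀ k : ℕ, k ≤ L → ∀ i j, |W k i j| ≤ B) ∧
    (∀ k : ℕ, 1 ≤ k → k ≤ L → ∀ j, |v k j| ≤ B) ∧
    (∀ x ∈ cube d, ENNReal.ofReal |f x| ≤ F) ∧
    (∀ x : Fin d → ℝ,
      f x = (W L).mulVec (fnnHidden m W v L fun i => x (Fin.cast hm0 i)) (Fin.cast hmL.symm 0))

/-- The partial derivative (within the cube) of `f` in the `i`-th coordinate direction. -/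
def pderivW (m : ℕ) (i : Fin m) (f : (Fin m → ℝ) → ℝ) : (Fin m → ℝ) → ℝ :=
  fun x => fderivWithin ℝ f (cube m) x (Pi.single i 1)

/-- The iterated partial derivative of `f` along the list of coordinate directions `l`. -/
def derivListW (m : ℕ) : List (Fin m) → ((Fin m → ℝ) → ℝ) → ((Fin m → ℝ) → ℝ)
  | [], f => f
  | (i :: l), f => derivListW m l (pderivW m i f)

/-- Membership in the Hölder ball `B^β_r([0,1]^m)`: with `k = ⌈β⌉ - 1` and
`λ = β - ⌈β⌉ + 1`, `f` has continuous partial derivatives (within the cube) up to order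
`k`, and the maximum of the sup-norms of its derivatives of order at most `k` plus the
maximum of the Hölder-`λ` seminorms of its derivatives of order `k` is at most `r`. -/
def MemHolderBall (m : ℕ) (β r : ℝ) (f : (Fin m → ℝ) → ℝ) : Prop :=
  (∀ l : List (Fin m), l.length < ⌈β⌉₊ - 1 →
    DifferentiableOn ℝ (derivListW m l f) (cube m)) ∧
  (∀ l : List (Fin m), l.length ≤ ⌈β⌉₊ - 1 →
    ContinuousOn (derivListW m l f) (cube m)) ∧
  ∃ A Bc : ℝ, A + Bc ≤ r ∧
    (∀ l : List (Fin m), l.length ≤ ⌈β⌉₊ - 1 → ∀ x ∈ cube m, |derivListW m l f x| ≤ A) ∧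
    (∀ l : List (Fin m), l.length = ⌈β⌉₊ - 1 → ∀ x ∈ cube m, ∀ z ∈ cube m, x ≠ z →
      |derivListW m l f x - derivListW m l f z| ≤ Bc * eucDist x z ^ (β - (⌈β⌉₊ : ℝ) + 1))

/-- `f ∈ G^M_d(dmax)`: on `[0,1]^d`, `f` computes the maximum of at most `dmax` of its
input coordinates. -/
def GM (d dmax : ℕ) (f : (Fin d → ℝ) → ℝ) : Prop :=
  ∃ (I : Finset (Fin d)) (hI : I.Nonempty), I.card ≤ dmax ∧
    ∀ x ∈ cube d, f x = I.sup' hI fun i => x i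

/-- `f ∈ G^H_d(dstar, β, r)`: on `[0,1]^d`, `f` depends on exactly `dstar` of its input
coordinates, through a function in the Hölder ball `B^β_r([0,1]^{dstar})`. -/
def GH (d dstar : ℕ) (β r : ℝ) (f : (Fin d → ℝ) → ℝ) : Prop :=
  ∃ (I : Finset (Fin d)) (hI : I.card = dstar) (g : (Fin dstar → ℝ) → ℝ),
    MemHolderBall dstar β r g ∧
    ∀ x ∈ cube d, f x = g fun j => x ↑(I.orderIsoOfFin hI j)

/-- Iterated composition `h_{n-1} ∘ ⋯ ∘ h_1 ∘ h_0` of a chain of maps with varying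
dimensions `D : ℕ → ℕ`. -/
def depChain (D : ℕ → ℕ) (h : ∀ i : ℕ, (Fin (D i) → ℝ) → (Fin (D (i + 1)) → ℝ)) :
    (n : ℕ) → (Fin (D 0) → ℝ) → (Fin (D n) → ℝ)
  | 0 => fun x => x
  | (n + 1) => fun x => h n (depChain D h n x)

/-- `f ∈ G^CHOM_d(q, K, dmax, dstar, β, r)`: on `[0,1]^d`, `f` is a composition
`h_q ∘ ⋯ ∘ h_0` where `h_0 : [0,1]^d → [0,1]^K`, `h_i : [0,1]^K → [0,1]^K` for
`0 < i < q`, `h_q : [0,1]^{d or K} → ℝ`, and each coordinate function of each `h_i`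
belongs to `G^H(dstar, β, r) ∪ G^M(dmax)`. -/
def GCHOM (q d dmax dstar K : ℕ) (β r : ℝ) (f : (Fin d → ℝ) → ℝ) : Prop :=
  ∃ (D : ℕ → ℕ) (h : ∀ i : ℕ, (Fin (D i) → ℝ) → (Fin (D (i + 1)) → ℝ))
    (hD0 : D 0 = d) (hDq : D (q + 1) = 1),
    (∀ i : ℕ, 1 ≤ i → i ≤ q → D i = K) ∧
    (∀ i : ℕ, i ≤ q → ∀ j : Fin (D (i + 1)),
      GH (D i) dstar β r (fun x => h i x j) ∨ GM (D i) dmax (fun x => h i x j)) ∧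
    (∀ i : ℕ, i < q → ∀ x ∈ cube (D i), h i x ∈ cube (D (i + 1))) ∧
    (∀ x ∈ cube d,
      f x = depChain D h (q + 1) (fun i => x (Fin.cast hD0 i)) (Fin.cast hDq.symm 0))

/-- `f ∈ G^CH_d(q, K, dstar, β, r)`: as `G^CHOM`, but every coordinate function belongs
to `G^H(dstar, β, r)`. -/
def GCH (q d dstar K : ℕ) (β r : ℝ) (f : (Fin d → ℝ) → ℝ) : Prop :=
  ∃ (D : ℕ → ℕ) (h : ∀ i : ℕ, (Fin (D i) → ℝ) → (Fin (D (i + 1)) → ℝ))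
    (hD0 : D 0 = d) (hDq : D (q + 1) = 1),
    (∀ i : ℕ, 1 ≤ i → i ≤ q → D i = K) ∧
    (∀ i : ℕ, i ≤ q → ∀ j : Fin (D (i + 1)), GH (D i) dstar β r (fun x => h i x j)) ∧
    (∀ i : ℕ, i < q → ∀ x ∈ cube (D i), h i x ∈ cube (D (i + 1))) ∧
    (∀ x ∈ cube d,
      f x = depChain D h (q + 1) (fun i => x (Fin.cast hD0 i)) (Fin.cast hDq.symm 0))

/-- The sup-norm over the cube of the (componentwise) difference of two vector-valued
functions. -/
def supDiffVec (m k : ℕ) (g g' : (Fin m → ℝ) → (Fin k → ℝ)) : ℝ :=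
  sSup {t | ∃ x ∈ cube m, ∃ j : Fin k, t = |g x j - g' x j|}

/-- The binary entropy function `H`. -/
def entH (t : ℝ) : ℝ :=
  if t = 0 ∨ t = 1 then 0 else t * Real.log (1 / t) + (1 - t) * Real.log (1 / (1 - t))

/-- `sup { 1/(2(2 + e^t + e^{-t})) : min u v ≤ t ≤ max u v }`. -/
def wSup (u v : ℝ) : ℝ :=
  sSup {s | ∃ t ∈ Set.Icc (min u v) (max u v), s = 1 / (2 * (2 + Real.exp t + Real.exp (-t)))}

/-- The function `J` of Statement 19. -/
def Jfun (x y : ℝ) : ℝ :=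
  (x + y) * Real.log (2 / (x + y)) + (2 - x - y) * Real.log (2 / (2 - x - y))
    - (x * Real.log (1 / x) + (1 - x) * Real.log (1 / (1 - x))
        + y * Real.log (1 / y) + (1 - y) * Real.log (1 / (1 - y)))

/-- The grid `G_{Q,d}` of points of `[0,1]^d` whose coordinates are odd multiples of
`1/(2Q)`. -/
def oddGrid (d Qn : ℕ) : Set (Fin d → ℝ) :=
  {a | a ∈ cube d ∧ ∀ i, ∃ k : ℤ, Odd k ∧ a i = (k : ℝ) / (2 * (Qn : ℝ))}

/-!
Around every grid point `a_v` put the product bump `x ↦ ∏ᵢ φ (Q xᵢ - Q (a_v)ᵢ)`, where `φ` is a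
smooth plateau function equal to `1` on `[-1/5, 1/5]` and vanishing outside `[-2/5, 2/5]`, and take
`f = c₁ Q^{-β} ∑_v T(a_v) bump_v`. The bumps have disjoint supports and equal `1` on the Euclidean
balls of radius `1/(5Q)`, which gives the interpolation property and the value of the sup norm.
A partial derivative of order `j` of `f` is again such a sum, built from derivatives of `φ` and
scaled by `Q^j`. Bounding its increments once by twice its sup norm and once through its Lipschitz
constant, `min (1, Q ρ) ≤ (Q ρ)^λ` bounds the Hölder seminorm of order `λ = β - k` of a derivative
of order `k` by a multiple of `c₁ Q^{-β} Q^k Q^λ = c₁`. So the Hölder norm of `f` is `O(c₁)`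
uniformly in `Q`, and a small `c₁` puts `f` into `B^β_r`.
-/

open scoped ContDiff

section EuclideanDistance

variable {m : ℕ}

lemma abs_sub_le_eucDist (x z : Fin m → ℝ) (i : Fin m) : |x i - z i| ≤ eucDist x z := by
  rw [eucDist, ← Real.sqrt_sq_eq_abs]
  exact Real.sqrt_le_sqrt <|
    Finset.single_le_sum (f := fun j => (x j - z j) ^ 2) (fun j _ => sq_nonneg _)
      (Finset.mem_univ i)

lemma norm_sub_le_eucDist (x z : Fin m → ℝ) : ‖x - z‖ ≤ eucDist x z :=
  (pi_norm_le_iff_of_nonneg (Real.sqrt_nonneg _)).mpr fun i => abs_sub_le_eucDist x z i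

end EuclideanDistance

lemma uniqueDiffOn_cube (m : ℕ) : UniqueDiffOn ℝ (cube m) := by
  have : cube m = Set.univ.pi fun _ => Set.Icc (0 : ℝ) 1 := by
    ext; simp only [cube, Set.mem_pi, Set.mem_univ, forall_true_left, Set.mem_ofPred_eq]
  exact this ▸ UniqueDiffOn.pi fun _ _ => uniqueDiffOn_Icc zero_lt_one

lemma derivListW_congr {m : ℕ} (l : List (Fin m)) {f f' : (Fin m → ℝ) → ℝ}
    (h : Set.EqOn f f' (cube m)) : Set.EqOn (derivListW m l f) (derivListW m l f') (cube m) := by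
  induction l generalizing f f' with
  | nil => exact h
  | cons i l ih =>
    refine ih fun y hy => ?_
    simp only [pderivW, fderivWithin_congr h (h hy)]

lemma MemHolderBall.mono {m : ℕ} {β r r' : ℝ} {f : (Fin m → ℝ) → ℝ}
    (hf : MemHolderBall m β r f) (hr : r ≤ r') : MemHolderBall m β r' f := by
  obtain ⟨hdiff, hcont, A, B, hAB, hA, hB⟩ := hf
  exact ⟨hdiff, hcont, A, B, hAB.trans hr, hA, hB⟩

lemma le_mul_rpow_of_le_of_le_mul {a C t γ : ℝ} (hC : 0 ≤ C) (ht : 0 ≤ t) (hγ₀ : 0 < γ)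
    (hγ₁ : γ ≤ 1) (ha : a ≤ C) (hat : a ≤ C * t) : a ≤ C * t ^ γ := by
  rcases le_total t 1 with h | h
  · exact hat.trans (mul_le_mul_of_nonneg_left (Real.self_le_rpow_of_le_one ht h hγ₁) hC)
  · exact ha.trans (le_mul_of_one_le_right hC (Real.one_le_rpow h hγ₀.le))

def bump : ContDiffBump (0 : ℝ) := ⟨1 / 5, 2 / 5, by norm_num, by norm_num⟩

lemma bump_eq_one {t : ℝ} (h : |t| ≤ 1 / 5) : bump t = 1 :=
  bump.one_of_mem_closedBall (by simpa [Real.dist_eq, bump] using h)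

lemma abs_le_of_iteratedDeriv_bump_ne_zero {j : ℕ} {t : ℝ} (h : iteratedDeriv j bump t ≠ 0) :
    |t| ≤ 2 / 5 := by
  have ht : t ∈ tsupport bump := support_iteratedFDeriv_subset j fun h' => h <| by
    rw [iteratedDeriv_eq_iteratedFDeriv, h', zero_apply]
  rw [bump.tsupport_eq, Metric.mem_closedBall, Real.dist_eq, sub_zero] at ht
  exact ht

lemma contDiff_bump : ContDiff ℝ ∞ (bump : ℝ → ℝ) := bump.contDiff

lemma hasDerivAt_iteratedDeriv_bump (j : ℕ) (t : ℝ) :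
    HasDerivAt (iteratedDeriv j bump) (iteratedDeriv (j + 1) bump t) t := by
  rw [iteratedDeriv_succ]
  exact (contDiff_bump.differentiable_iteratedDeriv j
    (mod_cast ENat.natCast_lt_top j) t).hasDerivAt

lemma exists_abs_iteratedDeriv_bump_le (N : ℕ) :
    ∃ M : ℝ, 0 < M ∧ ∀ j ≤ N, ∀ t, |iteratedDeriv j bump t| ≤ M := by
  have hbdd (j : ℕ) : ∃ C, ∀ t, |iteratedDeriv j bump t| ≤ C :=
    (contDiff_bump.continuous_iteratedDeriv j (mod_cast le_top)).bounded_above_of_compact_support <|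
      .intro (isCompact_closedBall 0 (2 / 5)) fun t ht => by
        by_contra h
        exact ht (by simpa using abs_le_of_iteratedDeriv_bump_ne_zero h)
  choose C hC using hbdd
  obtain ⟨M, hM⟩ := ((Finset.range (N + 1)).image C).exists_le
  exact ⟨max M 1, by positivity, fun j hj t => (hC j t).trans <|
    (hM _ (Finset.mem_image_of_mem C (Finset.mem_range.mpr (by omega)))).trans (le_max_left _ _)⟩

section Grid

variable (d Q : ℕ)

def gridPoint (v : Fin d → Fin Q) : Fin d → ℝ := fun i => (2 * (v i : ℝ) + 1) / (2 * Q)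

/-- `Q ^ (-∑ᵢ nᵢ)` times the mixed partial derivative of order `n` of the plateau bump
`x ↦ ∏ᵢ bump (Q xᵢ - (vᵢ + 1/2))` around `gridPoint d Q v`. -/
def gridBump (v : Fin d → Fin Q) (n : Fin d → ℕ) (x : Fin d → ℝ) : ℝ :=
  ∏ i, iteratedDeriv (n i) bump (Q * x i - (v i + 1 / 2))

def bumpSum (T : (Fin d → ℝ) → ℝ) (n : Fin d → ℕ) (x : Fin d → ℝ) : ℝ :=
  ∑ v, T (gridPoint d Q v) * gridBump d Q v n x

variable {d Q}

lemma natCast_mul_gridPoint (hQ : 0 < Q) (v : Fin d → Fin Q) (i : Fin d) :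
    Q * gridPoint d Q v i = v i + 1 / 2 := by
  have : (Q : ℝ) ≠ 0 := by positivity
  simp only [gridPoint]
  field_simp

lemma oddGrid_eq_range_gridPoint (hQ : 0 < Q) : oddGrid d Q = Set.range (gridPoint d Q) := by
  have hQ' : (0 : ℝ) < Q := by exact_mod_cast hQ
  ext a
  constructor
  · rintro ⟨ha, hodd⟩
    have hcoord (i : Fin d) : ∃ j : Fin Q, a i = (2 * (j : ℝ) + 1) / (2 * Q) := by
      obtain ⟨k, ⟨m, rfl⟩, hk⟩ := hodd i
      have hk' : ((2 * m + 1 : ℤ) : ℝ) = 2 * Q * a i := by rw [hk]; field_simp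
      have hm₀ : (0 : ℝ) ≤ ((2 * m + 1 : ℤ) : ℝ) := hk' ▸ by have := (ha i).1; positivity
      have hmQ : ((2 * m + 1 : ℤ) : ℝ) ≤ 2 * Q := hk' ▸ by nlinarith [(ha i).2]
      have hm₀' : 0 ≤ 2 * m + 1 := by exact_mod_cast hm₀
      have hmQ' : 2 * m + 1 ≤ 2 * Q := by exact_mod_cast hmQ
      refine ⟨⟨m.toNat, by omega⟩, ?_⟩
      have hcast : ((m.toNat : ℕ) : ℝ) = m := by exact_mod_cast Int.toNat_of_nonneg (by omega)
      rw [hk, Fin.val_mk, hcast]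
      push_cast
      ring
    choose v hv using hcoord
    exact ⟨v, funext fun i => (hv i).symm⟩
  · rintro ⟨v, rfl⟩
    refine ⟨fun i => ⟨by unfold gridPoint; positivity, ?_⟩,
      fun i => ⟨2 * (v i : ℤ) + 1, odd_two_mul_add_one _, ?_⟩⟩
    · have : (v i : ℝ) + 1 ≤ Q := by exact_mod_cast (v i).isLt
      rw [gridPoint, div_le_one (by positivity)]
      linarith
    · simp [gridPoint]

lemma gridPoint_mem_oddGrid (hQ : 0 < Q) (v : Fin d → Fin Q) : gridPoint d Q v ∈ oddGrid d Q := by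
  rw [oddGrid_eq_range_gridPoint hQ]
  exact ⟨v, rfl⟩

lemma abs_natCast_mul_sub_le_of_eucDist_le (hQ : 0 < Q) {v : Fin d → Fin Q} {x : Fin d → ℝ}
    (h : eucDist x (gridPoint d Q v) ≤ 1 / (5 * Q)) (i : Fin d) :
    |Q * x i - (v i + 1 / 2)| ≤ 1 / 5 := by
  have hQ' : (0 : ℝ) < Q := by exact_mod_cast hQ
  rw [← natCast_mul_gridPoint hQ v i, ← mul_sub, abs_mul, Nat.abs_cast]
  calc (Q : ℝ) * |x i - gridPoint d Q v i| ≤ Q * (1 / (5 * Q)) :=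
        mul_le_mul_of_nonneg_left ((abs_sub_le_eucDist _ _ i).trans h) hQ'.le
    _ = 1 / 5 := by field_simp

end Grid

section BumpSum

variable {d Q : ℕ}

lemma abs_sub_le_of_gridBump_ne_zero {v : Fin d → Fin Q} {n : Fin d → ℕ} {x : Fin d → ℝ}
    (h : gridBump d Q v n x ≠ 0) (i : Fin d) : |Q * x i - (v i + 1 / 2)| ≤ 2 / 5 :=
  abs_le_of_iteratedDeriv_bump_ne_zero fun h' => h (Finset.prod_eq_zero (Finset.mem_univ i) h')

lemma gridBump_eq_zero_of_ne {v w : Fin d → Fin Q} {n : Fin d → ℕ} {x : Fin d → ℝ}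
    (hv : ∀ i, |Q * x i - (v i + 1 / 2)| < 3 / 5) (hw : w ≠ v) : gridBump d Q w n x = 0 := by
  by_contra h
  refine hw (funext fun i => Fin.ext ?_)
  have hlt : |((w i : ℕ) : ℝ) - (v i : ℕ)| < 1 :=
    calc |((w i : ℕ) : ℝ) - (v i : ℕ)|
        = |(Q * x i - (v i + 1 / 2)) - (Q * x i - (w i + 1 / 2))| := by congr 1; ring
      _ ≤ |Q * x i - (v i + 1 / 2)| + |Q * x i - (w i + 1 / 2)| := abs_sub _ _
      _ < 1 := by linarith [hv i, abs_sub_le_of_gridBump_ne_zero h i]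
  have h₁ : ((w i : ℕ) : ℤ) - (v i : ℕ) < 1 := by exact_mod_cast (abs_lt.mp hlt).2
  have h₂ : -1 < ((w i : ℕ) : ℤ) - (v i : ℕ) := by exact_mod_cast (abs_lt.mp hlt).1
  omega

lemma bumpSum_eq_single (T : (Fin d → ℝ) → ℝ) (n : Fin d → ℕ) {v : Fin d → Fin Q}
    {x : Fin d → ℝ} (hv : ∀ i, |Q * x i - (v i + 1 / 2)| < 3 / 5) :
    bumpSum d Q T n x = T (gridPoint d Q v) * gridBump d Q v n x :=
  Finset.sum_eq_single v (fun _ _ hw => by rw [gridBump_eq_zero_of_ne hv hw, mul_zero])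
    (by simp)

lemma bumpSum_zero_eq (T : (Fin d → ℝ) → ℝ) {v : Fin d → Fin Q} {x : Fin d → ℝ}
    (hv : ∀ i, |Q * x i - (v i + 1 / 2)| ≤ 1 / 5) : bumpSum d Q T 0 x = T (gridPoint d Q v) := by
  rw [bumpSum_eq_single T 0 fun i => (hv i).trans_lt (by norm_num), gridBump,
    Finset.prod_eq_one fun i _ => ?_, mul_one]
  simpa using bump_eq_one (hv i)

lemma abs_bumpSum_le {T : (Fin d → ℝ) → ℝ} (hT : ∀ v, |T (gridPoint d Q v)| ≤ 1)
    {n : Fin d → ℕ} {x : Fin d → ℝ} {B : ℝ} (hB₀ : 0 ≤ B) (hB : ∀ v, |gridBump d Q v n x| ≤ B) :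
    |bumpSum d Q T n x| ≤ B := by
  by_cases h : ∃ v, gridBump d Q v n x ≠ 0
  · obtain ⟨v, hv⟩ := h
    rw [bumpSum_eq_single T n fun i => (abs_sub_le_of_gridBump_ne_zero hv i).trans_lt
      (by norm_num), abs_mul]
    exact (mul_le_mul (hT v) (hB v) (abs_nonneg _) zero_le_one).trans_eq (one_mul B)
  · simp only [not_exists, not_not] at h
    simp [bumpSum, h, hB₀]

lemma abs_gridBump_le {N : ℕ} {M : ℝ} (hM : ∀ j ≤ N, ∀ t, |iteratedDeriv j bump t| ≤ M)
    {n : Fin d → ℕ} (hn : ∀ i, n i ≤ N) (v : Fin d → Fin Q) (x : Fin d → ℝ) :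
    |gridBump d Q v n x| ≤ M ^ d := by
  rw [gridBump, Finset.abs_prod]
  exact (Finset.prod_le_prod (fun i _ => abs_nonneg _) fun i _ => hM _ (hn i) _).trans_eq
    (by simp)

lemma abs_gridBump_zero_le_one (v : Fin d → Fin Q) (x : Fin d → ℝ) :
    |gridBump d Q v 0 x| ≤ 1 := by
  have hM (j : ℕ) (hj : j ≤ 0) (t : ℝ) : |iteratedDeriv j bump t| ≤ 1 := by
    obtain rfl := Nat.le_zero.mp hj
    simpa [abs_of_nonneg bump.nonneg] using bump.le_one
  simpa using abs_gridBump_le (n := 0) hM (fun _ => le_rfl) v x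

lemma hasFDerivAt_gridBump (v : Fin d → Fin Q) (n : Fin d → ℕ) (x : Fin d → ℝ) :
    HasFDerivAt (gridBump d Q v n)
      (∑ i, (Q * gridBump d Q v (Function.update n i (n i + 1)) x) •
        ContinuousLinearMap.proj (R := ℝ) (φ := fun _ : Fin d => ℝ) i) x := by
  classical
  have hfactor (i : Fin d) : HasFDerivAt (fun y : Fin d → ℝ => iteratedDeriv (n i) bump
      (Q * y i - (v i + 1 / 2))) ((Q * iteratedDeriv (n i + 1) bump (Q * x i - (v i + 1 / 2))) •
        ContinuousLinearMap.proj (R := ℝ) (φ := fun _ : Fin d => ℝ) i) x := by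
    have := (hasDerivAt_iteratedDeriv_bump (n i) _).comp_hasFDerivAt x
      (((hasFDerivAt_apply (𝕜 := ℝ) i x).const_mul (Q : ℝ)).sub_const (v i + 1 / 2 : ℝ))
    rwa [smul_smul, mul_comm] at this
  refine (HasFDerivAt.finsetProd fun i _ => hfactor i).congr_fderiv
    (Finset.sum_congr rfl fun i _ => ?_)
  have hsplit : gridBump d Q v (Function.update n i (n i + 1)) x =
      iteratedDeriv (n i + 1) bump (Q * x i - (v i + 1 / 2)) *
        ∏ j ∈ Finset.univ.erase i, iteratedDeriv (n j) bump (Q * x j - (v j + 1 / 2)) := by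
    rw [gridBump, ← Finset.mul_prod_erase _ _ (Finset.mem_univ i), Function.update_self]
    exact congrArg _ (Finset.prod_congr rfl fun j hj => by
      rw [Function.update_of_ne (Finset.ne_of_mem_erase hj)])
  rw [smul_smul, hsplit]
  ring_nf

lemma hasFDerivAt_bumpSum (T : (Fin d → ℝ) → ℝ) (n : Fin d → ℕ) (x : Fin d → ℝ) :
    HasFDerivAt (bumpSum d Q T n)
      (∑ i, (Q * bumpSum d Q T (Function.update n i (n i + 1)) x) •
        ContinuousLinearMap.proj (R := ℝ) (φ := fun _ : Fin d => ℝ) i) x := by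
  refine (HasFDerivAt.fun_sum fun v _ =>
    (hasFDerivAt_gridBump v n x).const_mul (T (gridPoint d Q v))).congr_fderiv ?_
  ext w
  simp only [bumpSum, FunLike.coe_sum, Finset.sum_apply,
    FunLike.coe_smul, Pi.smul_apply, ContinuousLinearMap.proj_apply, smul_eq_mul,
    Finset.mul_sum, Finset.sum_mul]
  rw [Finset.sum_comm]
  exact Finset.sum_congr rfl fun i _ => Finset.sum_congr rfl fun v _ => by ring

lemma differentiable_bumpSum (T : (Fin d → ℝ) → ℝ) (n : Fin d → ℕ) :
    Differentiable ℝ (bumpSum d Q T n) :=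
  fun x => (hasFDerivAt_bumpSum T n x).differentiableAt

lemma pderivW_const_mul_bumpSum (T : (Fin d → ℝ) → ℝ) (C : ℝ) (n : Fin d → ℕ) (i : Fin d)
    {x : Fin d → ℝ} (hx : x ∈ cube d) :
    pderivW d i (fun y => C * bumpSum d Q T n y) x =
      C * Q * bumpSum d Q T (Function.update n i (n i + 1)) x := by
  rw [pderivW, ((hasFDerivAt_bumpSum T n x).const_mul C).hasFDerivWithinAt.fderivWithin
    (uniqueDiffOn_cube d x hx)]
  simp [Pi.single_apply, mul_assoc]

lemma derivListW_const_mul_bumpSum (T : (Fin d → ℝ) → ℝ) (l : List (Fin d)) (C : ℝ)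
    (n : Fin d → ℕ) : ∃ n' : Fin d → ℕ, (∀ j, n' j ≤ n j + l.length) ∧
      Set.EqOn (derivListW d l fun y => C * bumpSum d Q T n y)
        (fun y => C * Q ^ l.length * bumpSum d Q T n' y) (cube d) := by
  induction l generalizing C n with
  | nil => exact ⟨n, fun j => le_rfl, fun x _ => by simp [derivListW]⟩
  | cons i l ih =>
    obtain ⟨n', hn', heq⟩ := ih (C * Q) (Function.update n i (n i + 1))
    refine ⟨n', fun j => (hn' j).trans ?_, fun x hx => ?_⟩
    · rcases eq_or_ne j i with rfl | hj
      · simp only [Function.update_self, List.length_cons]; omega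
      · simp only [Function.update_of_ne hj, List.length_cons]; omega
    · rw [derivListW, derivListW_congr l (fun y hy => pderivW_const_mul_bumpSum T C n i hy) hx,
        heq hx, List.length_cons, pow_succ]
      ring

lemma abs_bumpSum_sub_le {T : (Fin d → ℝ) → ℝ} (hT : ∀ v, |T (gridPoint d Q v)| ≤ 1)
    {N : ℕ} {M : ℝ} (hM : ∀ j ≤ N, ∀ t, |iteratedDeriv j bump t| ≤ M) {n : Fin d → ℕ}
    (hn : ∀ i, n i < N) (x z : Fin d → ℝ) :
    |bumpSum d Q T n x - bumpSum d Q T n z| ≤ d * Q * M ^ d * ‖x - z‖ := by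
  have hM₀ : 0 ≤ M := (abs_nonneg _).trans (hM 0 (Nat.zero_le _) 0)
  have hpartial (y : Fin d → ℝ) (i : Fin d) :
      |bumpSum d Q T (Function.update n i (n i + 1)) y| ≤ M ^ d := by
    refine abs_bumpSum_le hT (by positivity) fun v => abs_gridBump_le hM (fun j => ?_) v y
    rcases eq_or_ne j i with rfl | hj
    · simpa using hn j
    · simpa [Function.update_of_ne hj] using (hn j).le
  have hproj (i : Fin d) : ‖ContinuousLinearMap.proj (R := ℝ) (φ := fun _ : Fin d => ℝ) i‖ ≤ 1 :=
    ContinuousLinearMap.opNorm_le_bound _ zero_le_one fun w => by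
      simpa using norm_le_pi_norm w i
  have hfderiv (y : Fin d → ℝ) : ‖fderiv ℝ (bumpSum d Q T n) y‖ ≤ d * Q * M ^ d := by
    rw [(hasFDerivAt_bumpSum T n y).fderiv]
    refine (norm_sum_le _ _).trans ?_
    calc ∑ i, ‖(Q * bumpSum d Q T (Function.update n i (n i + 1)) y) •
            ContinuousLinearMap.proj (R := ℝ) (φ := fun _ : Fin d => ℝ) i‖
        ≤ ∑ _i : Fin d, Q * (M ^ d * 1) := Finset.sum_le_sum fun i _ => by
          rw [norm_smul, Real.norm_eq_abs, abs_mul, Nat.abs_cast, mul_assoc]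
          gcongr
          exacts [hpartial y i, hproj i]
      _ = d * Q * M ^ d := by simp; ring
  simpa only [Real.norm_eq_abs] using convex_univ.norm_image_sub_le_of_norm_fderiv_le
    (fun y _ => differentiable_bumpSum T n y) (fun y _ => hfderiv y)
    (Set.mem_univ z) (Set.mem_univ x)

lemma abs_bumpSum_sub_le_rpow {T : (Fin d → ℝ) → ℝ} (hT : ∀ v, |T (gridPoint d Q v)| ≤ 1)
    {N : ℕ} {M : ℝ} (hM : ∀ j ≤ N, ∀ t, |iteratedDeriv j bump t| ≤ M) {n : Fin d → ℕ}
    (hn : ∀ i, n i < N) {γ : ℝ} (hγ₀ : 0 < γ) (hγ₁ : γ ≤ 1) (x z : Fin d → ℝ) :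
    |bumpSum d Q T n x - bumpSum d Q T n z| ≤ (d + 2) * M ^ d * (Q * eucDist x z) ^ γ := by
  have hM₀ : 0 ≤ M := (abs_nonneg _).trans (hM 0 (Nat.zero_le _) 0)
  have hsup (y : Fin d → ℝ) : |bumpSum d Q T n y| ≤ M ^ d :=
    abs_bumpSum_le hT (by positivity) fun v => abs_gridBump_le hM (fun i => (hn i).le) v y
  have hρ : 0 ≤ eucDist x z := Real.sqrt_nonneg _
  refine le_mul_rpow_of_le_of_le_mul (by positivity) (mul_nonneg (Nat.cast_nonneg Q) hρ) hγ₀ hγ₁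
    ?_ ?_
  · calc |bumpSum d Q T n x - bumpSum d Q T n z|
        ≤ |bumpSum d Q T n x| + |bumpSum d Q T n z| := abs_sub _ _
      _ ≤ (d + 2) * M ^ d := by nlinarith [hsup x, hsup z, pow_nonneg hM₀ d]
  · calc |bumpSum d Q T n x - bumpSum d Q T n z| ≤ d * Q * M ^ d * ‖x - z‖ :=
          abs_bumpSum_sub_le hT hM hn x z
      _ ≤ d * Q * M ^ d * eucDist x z := by gcongr; exact norm_sub_le_eucDist x z
      _ ≤ (d + 2) * M ^ d * (Q * eucDist x z) := by
          have : 0 ≤ Q * M ^ d * eucDist x z := by positivity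
          nlinarith

lemma memHolderBall_const_mul_bumpSum {β : ℝ} (hβ : 0 < β) (hQ : 0 < Q)
    {T : (Fin d → ℝ) → ℝ} (hT : ∀ v, |T (gridPoint d Q v)| ≤ 1) {M : ℝ}
    (hM : ∀ j ≤ ⌈β⌉₊, ∀ t, |iteratedDeriv j bump t| ≤ M) {c : ℝ} (hc : 0 ≤ c) :
    MemHolderBall d β ((d + 3) * c * M ^ d) (fun x => c / Q ^ β * bumpSum d Q T 0 x) := by
  have hM₀ : 0 ≤ M := (abs_nonneg _).trans (hM 0 (Nat.zero_le _) 0)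
  have hQ' : (0 : ℝ) < Q := by exact_mod_cast hQ
  have hN : 1 ≤ ⌈β⌉₊ := Nat.one_le_iff_ne_zero.mpr (Nat.ceil_pos.mpr hβ).ne'
  have hceil := Nat.ceil_lt_add_one hβ.le
  set k := ⌈β⌉₊ - 1
  set γ := β - (⌈β⌉₊ : ℝ) + 1
  have hk : (k : ℝ) + γ = β := by simp only [k, γ, Nat.cast_sub hN]; ring
  have hγ₀ : 0 < γ := by linarith
  have hγ₁ : γ ≤ 1 := by linarith [Nat.le_ceil β]
  have hscale {p : ℕ} (hp : p ≤ k) : c / Q ^ β * Q ^ p ≤ c := by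
    have hpβ : (p : ℝ) ≤ β := by linarith [(Nat.cast_le (α := ℝ)).mpr hp, hγ₀]
    rw [div_mul_eq_mul_div, div_le_iff₀ (by positivity), ← Real.rpow_natCast]
    exact mul_le_mul_of_nonneg_left
      (Real.rpow_le_rpow_of_exponent_le (by exact_mod_cast hQ) hpβ) hc
  have hderiv (l : List (Fin d)) := derivListW_const_mul_bumpSum (Q := Q) T l (c / Q ^ β) 0
  refine ⟨fun l _ => ?_, fun l _ => ?_, c * M ^ d, (d + 2) * c * M ^ d, le_of_eq (by ring),
    fun l hl x hx => ?_, fun l hl x hx z hz _ => ?_⟩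
  · obtain ⟨n, -, h⟩ := hderiv l
    exact ((differentiable_bumpSum T n).const_mul _).differentiableOn.congr h
  · obtain ⟨n, -, h⟩ := hderiv l
    exact ((differentiable_bumpSum T n).const_mul _).continuous.continuousOn.congr h
  · obtain ⟨n, hn, h⟩ := hderiv l
    rw [h hx, abs_mul, abs_of_nonneg (by positivity)]
    refine mul_le_mul (hscale hl) (abs_bumpSum_le hT (by positivity) fun v =>
      abs_gridBump_le hM (fun i => ?_) v x) (abs_nonneg _) hc
    exact (by simpa using hn i : n i ≤ l.length).trans (hl.trans (Nat.sub_le _ _))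
  · obtain ⟨n, hn, h⟩ := hderiv l
    have hQk : c / Q ^ β * Q ^ l.length * Q ^ γ = c := by
      rw [hl, mul_assoc, ← Real.rpow_natCast, ← Real.rpow_add hQ', hk,
        div_mul_cancel₀ _ (by positivity)]
    rw [h hx, h hz, ← mul_sub, abs_mul, abs_of_nonneg (by positivity)]
    calc c / Q ^ β * Q ^ l.length * |bumpSum d Q T n x - bumpSum d Q T n z|
        ≤ c / Q ^ β * Q ^ l.length * ((d + 2) * M ^ d * (Q * eucDist x z) ^ γ) := by
          refine mul_le_mul_of_nonneg_left (abs_bumpSum_sub_le_rpow hT hM (fun i => ?_) hγ₀ hγ₁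
            x z) (by positivity)
          exact (by simpa [hl] using hn i : n i ≤ k).trans_lt (Nat.sub_lt hN one_pos)
      _ = (d + 2) * c * M ^ d * eucDist x z ^ γ := by
          rw [Real.mul_rpow (y := eucDist x z) (Nat.cast_nonneg _) (Real.sqrt_nonneg _)]
          linear_combination ((d + 2) * M ^ d * eucDist x z ^ γ) * hQk

lemma sSup_abs_const_mul_bumpSum_zero (hQ : 0 < Q) {T : (Fin d → ℝ) → ℝ}
    (hT : ∀ v, T (gridPoint d Q v) = 1 ∨ T (gridPoint d Q v) = -1) {c : ℝ} (hc : 0 ≤ c) :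
    sSup {t | ∃ x ∈ cube d, t = |c * bumpSum d Q T 0 x|} = c := by
  have hT' (v : Fin d → Fin Q) : |T (gridPoint d Q v)| ≤ 1 := by
    rcases hT v with h | h <;> simp [h]
  let v₀ : Fin d → Fin Q := fun _ => ⟨0, hQ⟩
  have hv₀ : bumpSum d Q T 0 (gridPoint d Q v₀) = T (gridPoint d Q v₀) :=
    bumpSum_zero_eq T fun i => by simp [natCast_mul_gridPoint hQ]
  refine IsGreatest.csSup_eq ⟨⟨gridPoint d Q v₀, (gridPoint_mem_oddGrid hQ v₀).1, ?_⟩, ?_⟩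
  · rw [hv₀, abs_mul, abs_of_nonneg hc]
    rcases hT v₀ with h | h <;> simp [h]
  · rintro _ ⟨x, -, rfl⟩
    rw [abs_mul, abs_of_nonneg hc]
    exact mul_le_of_le_one_right hc
      (abs_bumpSum_le hT' zero_le_one fun v => abs_gridBump_zero_le_one v x)

end BumpSum

theorem statement16_general (d : ℕ) (β r : ℝ) (hβ : 0 < β) (hr : 0 < r) :
    ∃ c₁ : ℝ, c₁ ∈ Set.Ioo (0 : ℝ) (1 / 9999) ∧
      ∀ Qn : ℕ, 2 ≤ Qn → ∀ T : (Fin d → ℝ) → ℝ,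
        (∀ a ∈ oddGrid d Qn, T a = 1 ∨ T a = -1) →
        ∃ f : (Fin d → ℝ) → ℝ, MemHolderBall d β r f ∧
          sSup {t | ∃ x ∈ cube d, t = |f x|} = c₁ / (Qn : ℝ) ^ β ∧
          ∀ a ∈ oddGrid d Qn, ∀ x ∈ cube d, eucDist x a ≤ 1 / (5 * (Qn : ℝ)) →
            f x = (c₁ / (Qn : ℝ) ^ β) * T a := by
  obtain ⟨M, hM₀, hM⟩ := exists_abs_iteratedDeriv_bump_le ⌈β⌉₊
  set c₁ := min (1 / 19998) (r / ((d + 3) * M ^ d))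
  have hc₁ : 0 < c₁ := lt_min (by norm_num) (by positivity)
  have hc₁r : (d + 3) * c₁ * M ^ d ≤ r := by
    have := min_le_right (1 / 19998 : ℝ) (r / ((d + 3) * M ^ d))
    rw [le_div_iff₀ (by positivity)] at this
    linarith
  refine ⟨c₁, ⟨hc₁, (min_le_left _ _).trans_lt (by norm_num)⟩, fun Q hQ T hT => ?_⟩
  have hQ₀ : 0 < Q := by omega
  have hTgrid (v : Fin d → Fin Q) := hT _ (gridPoint_mem_oddGrid hQ₀ v)
  refine ⟨fun x => c₁ / Q ^ β * bumpSum d Q T 0 x, ?_,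
    sSup_abs_const_mul_bumpSum_zero hQ₀ hTgrid (by positivity), ?_⟩
  · refine (memHolderBall_const_mul_bumpSum hβ hQ₀ (fun v => ?_) hM hc₁.le).mono hc₁r
    rcases hTgrid v with h | h <;> simp [h]
  · intro a ha x _ hx
    obtain ⟨v, rfl⟩ : a ∈ Set.range (gridPoint d Q) := oddGrid_eq_range_gridPoint hQ₀ ▸ ha
    beta_reduce
    rw [bumpSum_zero_eq T (abs_natCast_mul_sub_le_of_eucDist_le hQ₀ hx)]

/-- Lemma 3.1: bump-combination functions in the Hölder ball attaining
prescribed signs on the grid `G_{Q,d}`. -/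
theorem statement16 (d : ℕ) (hd : 0 < d) (β r : ℝ) (hβ : 0 < β) (hr : 0 < r) :
    ∃ c₁ : ℝ, c₁ ∈ Set.Ioo (0 : ℝ) (1 / 9999) ∧
      ∀ Qn : ℕ, 2 ≤ Qn → ∀ T : (Fin d → ℝ) → ℝ,
        (∀ a ∈ oddGrid d Qn, T a = 1 ∨ T a = -1) →
        ∃ f : (Fin d → ℝ) → ℝ, MemHolderBall d β r f ∧
          sSup {t | ∃ x ∈ cube d, t = |f x|} = c₁ / (Qn : ℝ) ^ β ∧
          ∀ a ∈ oddGrid d Qn, ∀ x ∈ cube d, eucDist x a ≤ 1 / (5 * (Qn : ℝ)) →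
            f x = (c₁ / (Qn : ℝ) ^ β) * T a :=
  statement16_general d β r hβ hr

end

end DNNLogistic
end

section
/- Let ε ∈ (0,1/5], d ∈ ℕ, let Q be a Borel probability measure on [0,1]^d, and let η₁, η₂: [0,1]^d → [ε, 3ε] be Borel measurable. Then KL(P_{η₁,Q} ‖ P_{η₂,Q}) ≤ 9ε. -/
open MeasureTheory
open scoped ENNReal NNReal

namespace DNNLogistic

noncomputable section

/-! `P_{η₁,Q}` has density `η₁/η₂` on the label `1` and `(1-η₁)/(1-η₂)` on the label `-1` with
respect to `P_{η₂,Q}`, so the KL divergence is the `Q`-average of the Bernoulli divergences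
`KL(Ber(η₁ x) ‖ Ber(η₂ x))`. Each of these is at most the χ²-divergence
`(η₁ x - η₂ x)² / (η₂ x (1 - η₂ x))` by `log t ≤ t - 1`, and for `η₁ x, η₂ x ∈ [ε, 3ε]`
the latter is at most `9ε`. -/

open Real Set

lemma abs_log_le_of_mem_Icc {c r : ℝ} (hc : 0 < c) (hr : r ∈ Icc c⁻¹ c) : |log r| ≤ c := by
  have hr₀ : 0 < r := (inv_pos.2 hc).trans_le hr.1
  rw [abs_le]
  constructor
  · linarith [neg_inv_le_log hr₀.le, inv_le_of_inv_le₀ hc hr.1]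
  · linarith [log_le_self hr₀.le, hr.2]

def bernoulliKL (a b : ℝ) : ℝ := a * log (a / b) + (1 - a) * log ((1 - a) / (1 - b))

lemma mul_log_div_le_mul_sub {a b : ℝ} (ha : 0 ≤ a) (hb : 0 < b) :
    a * log (a / b) ≤ a * (a / b - 1) := by
  rcases ha.eq_or_lt with rfl | ha
  · simp
  · exact mul_le_mul_of_nonneg_left (log_le_sub_one_of_pos (by positivity)) ha.le

lemma bernoulliKL_le_chiSq {a b : ℝ} (ha₀ : 0 ≤ a) (ha₁ : a ≤ 1) (hb₀ : 0 < b) (hb₁ : b < 1) :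
    bernoulliKL a b ≤ (a - b) ^ 2 / (b * (1 - b)) := by
  have h₁ := mul_log_div_le_mul_sub ha₀ hb₀
  have h₂ := mul_log_div_le_mul_sub (sub_nonneg.2 ha₁) (sub_pos.2 hb₁)
  have hsum : a * (a / b - 1) + (1 - a) * ((1 - a) / (1 - b) - 1)
      = (a - b) ^ 2 / (b * (1 - b)) := by
    field_simp [(sub_pos.2 hb₁).ne']
    ring
  unfold bernoulliKL
  linarith

lemma chiSq_le_of_mem_Icc {ε a b : ℝ} (hε : ε ∈ Ioc 0 (1 / 5)) (ha : a ∈ Icc ε (3 * ε))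
    (hb : b ∈ Icc ε (3 * ε)) : (a - b) ^ 2 / (b * (1 - b)) ≤ 9 * ε := by
  obtain ⟨hε₀, hε₁⟩ := hε
  obtain ⟨ha₀, ha₁⟩ := ha
  obtain ⟨hb₀, hb₁⟩ := hb
  have hlo : (a - ε) ^ 2 ≤ 9 * ε ^ 2 * (1 - ε) := by nlinarith
  have hhi : (a - 3 * ε) ^ 2 ≤ 27 * ε ^ 2 * (1 - 3 * ε) := by nlinarith
  -- `(a - b)² - 9ε b (1 - b)` is convex in `b` and nonpositive at `b = ε` and `b = 3ε`.
  have hconv : 2 * ε * ((a - b) ^ 2 - 9 * ε * (b * (1 - b))) ≤ 0 := by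
    nlinarith [mul_nonneg (sub_nonneg.2 hb₁) (sub_nonneg.2 hlo),
      mul_nonneg (sub_nonneg.2 hb₀) (sub_nonneg.2 hhi),
      mul_nonneg (mul_nonneg hε₀.le (by linarith : (0 : ℝ) ≤ 1 + 9 * ε))
        (mul_nonneg (sub_nonneg.2 hb₀) (sub_nonneg.2 hb₁))]
  rw [div_le_iff₀ (by nlinarith)]
  nlinarith

section WithDensity

variable {α β : Type*} [MeasurableSpace α] [MeasurableSpace β] (μ : Measure α)

lemma withDensity_map {e : α → β} (he : Measurable e) {g : β → ℝ≥0∞} (hg : Measurable g) :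
    (μ.map e).withDensity g = (μ.withDensity (g ∘ e)).map e := by
  ext s hs
  rw [withDensity_apply _ hs, setLIntegral_map hs hg he, Measure.map_apply he hs,
    withDensity_apply _ (he hs), Function.comp_def]

lemma withDensity_ofReal_withDensity_ofReal_div {a b : α → ℝ} (ha : Measurable a)
    (hb : Measurable b) (hb₀ : ∀ x, 0 < b x) :
    (μ.withDensity fun x => ENNReal.ofReal (b x)).withDensity
        (fun x => ENNReal.ofReal (a x / b x)) = μ.withDensity fun x => ENNReal.ofReal (a x) := by
  rw [← withDensity_mul _ hb.ennreal_ofReal (ha.fun_div hb).ennreal_ofReal]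
  congr 1 with x
  rw [Pi.mul_apply, ← ENNReal.ofReal_mul (hb₀ x).le, mul_div_cancel₀ _ (hb₀ x).ne']

lemma integrable_mul_comp_of_map_withDensity {h : α → ℝ} (hm : Measurable h)
    (hnn : ∀ x, 0 ≤ h x) {e : α → β} (he : Measurable e) {f : β → ℝ}
    (hf : Integrable f ((μ.withDensity fun x => ENNReal.ofReal (h x)).map e)) :
    Integrable (fun x => h x * f (e x)) μ := by
  rw [integrable_map_measure hf.aestronglyMeasurable he.aemeasurable,
    integrable_withDensity_iff_integrable_smul' hm.ennreal_ofReal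
      (ae_of_all _ fun _ => ENNReal.ofReal_lt_top)] at hf
  simpa only [ENNReal.toReal_ofReal (hnn _), smul_eq_mul, Function.comp_apply] using hf

lemma integral_map_withDensity_ofReal {h : α → ℝ} (hm : Measurable h) (hnn : ∀ x, 0 ≤ h x)
    {e : α → β} (he : Measurable e) {f : β → ℝ}
    (hf : AEStronglyMeasurable f ((μ.withDensity fun x => ENNReal.ofReal (h x)).map e)) :
    ∫ z, f z ∂(μ.withDensity fun x => ENNReal.ofReal (h x)).map e = ∫ x, h x * f (e x) ∂μ := by
  rw [integral_map he.aemeasurable hf, integral_withDensity_eq_integral_toReal_smul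
    hm.ennreal_ofReal (ae_of_all _ fun _ => ENNReal.ofReal_lt_top)]
  simp only [ENNReal.toReal_ofReal (hnn _), smul_eq_mul]

end WithDensity

section LabelRatio

variable {α : Type*} {η₁ η₂ : α → ℝ}

def labelRatio (η₁ η₂ : α → ℝ) (z : α × ℝ) : ℝ :=
  if z.2 = 1 then η₁ z.1 / η₂ z.1 else (1 - η₁ z.1) / (1 - η₂ z.1)

@[simp]
lemma labelRatio_one (x : α) : labelRatio η₁ η₂ (x, 1) = η₁ x / η₂ x := if_pos rfl

@[simp]
lemma labelRatio_neg_one (x : α) :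
    labelRatio η₁ η₂ (x, -1) = (1 - η₁ x) / (1 - η₂ x) := if_neg (by norm_num)

lemma measurable_labelRatio [MeasurableSpace α] (h₁ : Measurable η₁) (h₂ : Measurable η₂) :
    Measurable (labelRatio η₁ η₂) :=
  Measurable.ite (measurable_snd (measurableSet_singleton 1))
    ((h₁.comp measurable_fst).div (h₂.comp measurable_fst))
    (((h₁.const_sub 1).comp measurable_fst).div
      ((h₂.const_sub 1).comp measurable_fst))

lemma labelRatio_nonneg (h₁ : ∀ x, η₁ x ∈ Icc 0 1) (h₂ : ∀ x, η₂ x ∈ Ioo 0 1) (z : α × ℝ) :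
    0 ≤ labelRatio η₁ η₂ z := by
  unfold labelRatio
  split_ifs
  · exact div_nonneg (h₁ z.1).1 (h₂ z.1).1.le
  · exact div_nonneg (sub_nonneg.2 (h₁ z.1).2) (sub_pos.2 (h₂ z.1).2).le

lemma labelRatio_mem_Icc {ε : ℝ} (hε : ε ∈ Ioc 0 (1 / 5)) (h₁ : ∀ x, η₁ x ∈ Icc ε (3 * ε))
    (h₂ : ∀ x, η₂ x ∈ Icc ε (3 * ε)) (z : α × ℝ) : labelRatio η₁ η₂ z ∈ Icc 3⁻¹ 3 := by
  obtain ⟨hε₀, hε₁⟩ := hε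
  obtain ⟨ha₀, ha₁⟩ := h₁ z.1
  obtain ⟨hb₀, hb₁⟩ := h₂ z.1
  unfold labelRatio
  split_ifs
  · constructor
    · rw [le_div_iff₀ (by linarith)]; linarith
    · rw [div_le_iff₀ (by linarith)]; linarith
  · constructor
    · rw [le_div_iff₀ (by linarith)]; linarith
    · rw [div_le_iff₀ (by linarith)]; linarith

end LabelRatio

section PeQ

variable {d : ℕ} (Q : Measure (Fin d → ℝ))

lemma isProbabilityMeasure_PeQ [IsProbabilityMeasure Q] {η : (Fin d → ℝ) → ℝ}
    (hη : Measurable η) (hη01 : ∀ x, η x ∈ Icc 0 1) : IsProbabilityMeasure (PeQ d Q η) := by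
  constructor
  have hsum : ∀ x, ENNReal.ofReal (η x) + ENNReal.ofReal (1 - η x) = 1 := fun x => by
    rw [← ENNReal.ofReal_add (hη01 x).1 (sub_nonneg.2 (hη01 x).2), add_sub_cancel,
      ENNReal.ofReal_one]
  simp only [PeQ, Measure.coe_add, Pi.add_apply, Measure.map_apply measurable_prodMk_right
    MeasurableSet.univ, preimage_univ, withDensity_apply _ MeasurableSet.univ,
    Measure.restrict_univ]
  rw [← lintegral_add_left hη.ennreal_ofReal]
  simp [hsum]

lemma integrable_label_terms_of_PeQ {η : (Fin d → ℝ) → ℝ} (hη : Measurable η)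
    (hη01 : ∀ x, η x ∈ Icc 0 1) {f : (Fin d → ℝ) × ℝ → ℝ} (hf : Integrable f (PeQ d Q η)) :
    Integrable (fun x => η x * f (x, 1)) Q ∧ Integrable (fun x => (1 - η x) * f (x, -1)) Q :=
  ⟨integrable_mul_comp_of_map_withDensity Q hη (fun x => (hη01 x).1) measurable_prodMk_right
      (hf.mono_measure (Measure.le_add_right le_rfl)),
    integrable_mul_comp_of_map_withDensity Q (hη.const_sub 1) (fun x => sub_nonneg.2 (hη01 x).2)
      measurable_prodMk_right (hf.mono_measure (Measure.le_add_left le_rfl))⟩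

lemma integral_PeQ {η : (Fin d → ℝ) → ℝ} (hη : Measurable η) (hη01 : ∀ x, η x ∈ Icc 0 1)
    {f : (Fin d → ℝ) × ℝ → ℝ} (hf : Integrable f (PeQ d Q η)) :
    ∫ z, f z ∂PeQ d Q η = ∫ x, (η x * f (x, 1) + (1 - η x) * f (x, -1)) ∂Q := by
  obtain ⟨h₁, h₂⟩ := integrable_label_terms_of_PeQ Q hη hη01 hf
  have hf₁ := hf.mono_measure (Measure.le_add_right le_rfl)
  have hf₂ := hf.mono_measure (Measure.le_add_left le_rfl)
  rw [integral_add h₁ h₂, PeQ, integral_add_measure hf₁ hf₂,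
    integral_map_withDensity_ofReal Q hη (fun x => (hη01 x).1) measurable_prodMk_right
      hf₁.aestronglyMeasurable,
    integral_map_withDensity_ofReal Q (hη.const_sub 1)
      (fun x => sub_nonneg.2 (hη01 x).2) measurable_prodMk_right hf₂.aestronglyMeasurable]

lemma PeQ_eq_withDensity_labelRatio {η₁ η₂ : (Fin d → ℝ) → ℝ} (h₁ : Measurable η₁)
    (h₂ : Measurable η₂) (h₂01 : ∀ x, η₂ x ∈ Ioo 0 1) :
    PeQ d Q η₁ = (PeQ d Q η₂).withDensity fun z => ENNReal.ofReal (labelRatio η₁ η₂ z) := by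
  have hg := (measurable_labelRatio h₁ h₂).ennreal_ofReal
  rw [PeQ, PeQ, withDensity_add_measure, withDensity_map _ measurable_prodMk_right hg,
    withDensity_map _ measurable_prodMk_right hg]
  simp only [Function.comp_def, labelRatio_one, labelRatio_neg_one]
  rw [withDensity_ofReal_withDensity_ofReal_div Q h₁ h₂ fun x => (h₂01 x).1,
    withDensity_ofReal_withDensity_ofReal_div Q (h₁.const_sub 1)
      (h₂.const_sub 1) fun x => sub_pos.2 (h₂01 x).2]

lemma PeQ_absolutelyContinuous {η₁ η₂ : (Fin d → ℝ) → ℝ} (h₁ : Measurable η₁)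
    (h₂ : Measurable η₂) (h₂01 : ∀ x, η₂ x ∈ Ioo 0 1) : PeQ d Q η₁ ≪ PeQ d Q η₂ :=
  PeQ_eq_withDensity_labelRatio Q h₁ h₂ h₂01 ▸ withDensity_absolutelyContinuous _ _

lemma integral_log_rnDeriv_PeQ [IsProbabilityMeasure Q] {η₁ η₂ : (Fin d → ℝ) → ℝ}
    (h₁ : Measurable η₁) (h₂ : Measurable η₂) (h₁01 : ∀ x, η₁ x ∈ Icc 0 1)
    (h₂01 : ∀ x, η₂ x ∈ Ioo 0 1)
    (hint : Integrable (fun z => log (labelRatio η₁ η₂ z)) (PeQ d Q η₁)) :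
    ∫ z, log ((PeQ d Q η₁).rnDeriv (PeQ d Q η₂) z).toReal ∂PeQ d Q η₁
      = ∫ x, bernoulliKL (η₁ x) (η₂ x) ∂Q := by
  have := isProbabilityMeasure_PeQ Q h₂ fun x => Ioo_subset_Icc_self (h₂01 x)
  have hrn := (PeQ_absolutelyContinuous Q h₁ h₂ h₂01).ae_eq
    (PeQ_eq_withDensity_labelRatio Q h₁ h₂ h₂01 ▸
      Measure.rnDeriv_withDensity (PeQ d Q η₂) (measurable_labelRatio h₁ h₂).ennreal_ofReal)
  calc ∫ z, log ((PeQ d Q η₁).rnDeriv (PeQ d Q η₂) z).toReal ∂PeQ d Q η₁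
      = ∫ z, log (labelRatio η₁ η₂ z) ∂PeQ d Q η₁ := integral_congr_ae <| hrn.mono fun z hz => by
        simp only [hz, ENNReal.toReal_ofReal (labelRatio_nonneg h₁01 h₂01 z)]
    _ = ∫ x, bernoulliKL (η₁ x) (η₂ x) ∂Q := by
        rw [integral_PeQ Q h₁ h₁01 hint]
        simp only [labelRatio_one, labelRatio_neg_one, bernoulliKL]

end PeQ

theorem statement18_general (ε : ℝ) (hε : ε ∈ Set.Ioc (0 : ℝ) (1 / 5)) (d : ℕ)
    (Q : Measure (Fin d → ℝ)) [IsProbabilityMeasure Q]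
    (η₁ η₂ : (Fin d → ℝ) → ℝ) (h1m : Measurable η₁) (h2m : Measurable η₂)
    (h1r : ∀ x, η₁ x ∈ Set.Icc ε (3 * ε)) (h2r : ∀ x, η₂ x ∈ Set.Icc ε (3 * ε)) :
    PeQ d Q η₁ ≪ PeQ d Q η₂ ∧
    ∫ z, Real.log ((PeQ d Q η₁).rnDeriv (PeQ d Q η₂) z).toReal ∂(PeQ d Q η₁) ≤ 9 * ε := by
  have hmem : ∀ {η : (Fin d → ℝ) → ℝ}, (∀ x, η x ∈ Icc ε (3 * ε)) → ∀ x, η x ∈ Ioo 0 1 :=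
    fun hη x => ⟨hε.1.trans_le (hη x).1, by linarith [(hη x).2, hε.2]⟩
  have hη₁ x : η₁ x ∈ Icc 0 1 := Ioo_subset_Icc_self (hmem h1r x)
  have hη₂ := hmem h2r
  have : IsProbabilityMeasure (PeQ d Q η₁) := isProbabilityMeasure_PeQ Q h1m hη₁
  have hint : Integrable (fun z => log (labelRatio η₁ η₂ z)) (PeQ d Q η₁) :=
    Integrable.of_bound (measurable_labelRatio h1m h2m).log.aestronglyMeasurable 3
      (ae_of_all _ fun z => abs_log_le_of_mem_Icc three_pos (labelRatio_mem_Icc hε h1r h2r z))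
  have hKL : Integrable (fun x => bernoulliKL (η₁ x) (η₂ x)) Q := by
    obtain ⟨h₁, h₂⟩ := integrable_label_terms_of_PeQ Q h1m hη₁ hint
    simp only [labelRatio_one, labelRatio_neg_one] at h₁ h₂
    exact h₁.fun_add h₂
  refine ⟨PeQ_absolutelyContinuous Q h1m h2m hη₂, ?_⟩
  calc ∫ z, log ((PeQ d Q η₁).rnDeriv (PeQ d Q η₂) z).toReal ∂PeQ d Q η₁
      = ∫ x, bernoulliKL (η₁ x) (η₂ x) ∂Q := integral_log_rnDeriv_PeQ Q h1m h2m hη₁ hη₂ hint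
    _ ≤ ∫ _, 9 * ε ∂Q := integral_mono hKL (integrable_const _) fun x =>
        (bernoulliKL_le_chiSq (hη₁ x).1 (hη₁ x).2 (hη₂ x).1 (hη₂ x).2).trans
          (chiSq_le_of_mem_Icc hε (h1r x) (h2r x))
    _ = 9 * ε := by simp

/-- Lemma: KL divergence bound `KL(P_{η₁,Q} ‖ P_{η₂,Q}) ≤ 9ε`; the
conclusion states absolute continuity together with the bound on `∫ log(dP₁/dP₂) dP₁`,
which together amount to `KL ≤ 9ε`. -/
theorem statement18 (ε : ℝ) (hε : ε ∈ Set.Ioc (0 : ℝ) (1 / 5)) (d : ℕ) (hd : 0 < d)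
    (Q : Measure (Fin d → ℝ)) [IsProbabilityMeasure Q] (hQ : Q (cube d) = 1)
    (η₁ η₂ : (Fin d → ℝ) → ℝ) (h1m : Measurable η₁) (h2m : Measurable η₂)
    (h1r : ∀ x, η₁ x ∈ Set.Icc ε (3 * ε)) (h2r : ∀ x, η₂ x ∈ Set.Icc ε (3 * ε)) :
    PeQ d Q η₁ ≪ PeQ d Q η₂ ∧
    ∫ z, Real.log ((PeQ d Q η₁).rnDeriv (PeQ d Q η₂) z).toReal ∂(PeQ d Q η₁) ≤ 9 * ε :=
  statement18_general ε hε d Q η₁ η₂ h1m h2m h1r h2r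

end

end DNNLogistic
end
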